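/- When transaction amounts are not all equal, the greedy immediate-processing policy PFI is optimal with respect to neither the success rate nor the throughput: there exist a capacity C, initial balances, a finite sequence of transactions with zero buffering times (τ_n = t_n) and non-identical amounts, and an admissible policy π, such that PFI achieves a strictly smaller final number of executed transactions and a strictly smaller final throughput than π. -/

import Mathlib

open scoped Classical
open Finset

/-- A transaction in a payment channel between nodes `A` and `B`.
`dir = true` means the transaction goes from `A` to `B`, `dir = false` from `B` to `A`.
`arr` is its arrival time, `amt` its (positive, integer) amount, and `ddl ≥ arr` its
deadline expiration time (arrival time plus maximum buffering time). -/
structure Txn where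
  dir : Bool
  arr : ℝ
  amt : ℕ
  ddl : ℝ
  arr_nonneg : 0 ≤ arr
  amt_pos : 1 ≤ amt
  arr_le_ddl : arr ≤ ddl

/-- An instance of the payment-channel scheduling problem: a channel of capacity
`cap ≥ 1`, an initial balance `QA0 ≤ cap` of node `A` (node `B` holds `cap - QA0`),
and a finite sequence of `N` transactions. -/
structure PCInstance (N : ℕ) where
  cap : ℕ
  cap_pos : 1 ≤ cap
  QA0 : ℕ
  QA0_le : QA0 ≤ cap
  tx : Fin N → Txn

/-- A (scheduling) policy: each transaction is assigned an execution time
(`exec? n = some s`) or is dropped (`exec? n = none`; a dropped transaction is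
dropped at its deadline expiration time).  `ord` is an injective priority used to
order actions, in particular transactions executed at the same time instant. -/
structure Policy (N : ℕ) where
  exec? : Fin N → Option ℝ
  ord : Fin N → ℕ
  ord_inj : Function.Injective ord

variable {N : ℕ}

/-- The net effect of executing a transaction on the balance of node `A`. -/
def delta (p : Txn) : ℤ := if p.dir then -(p.amt : ℤ) else (p.amt : ℤ)

/-- The balance of node `A` just before policy `P` executes transaction `n`,
i.e. accounting for all executions ordered before `n`. -/
noncomputable def QAbefore (I : PCInstance N) (P : Policy N) (n : Fin N) : ℤ :=
  (I.QA0 : ℤ) +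
    ∑ m ∈ univ.filter (fun m : Fin N => (P.exec? m).isSome ∧ P.ord m < P.ord n),
      delta (I.tx m)

/-- The balance of node `A` just before the action concerning transaction `n`
taken at time `τ`: all executions strictly before `τ`, together with executions
at the instant `τ` itself that are ordered before `n`, are accounted for. -/
noncomputable def QApre (I : PCInstance N) (P : Policy N) (n : Fin N) (τ : ℝ) : ℤ :=
  (I.QA0 : ℤ) +
    ∑ m ∈ univ.filter
        (fun m : Fin N => ∃ s, P.exec? m = some s ∧ (s < τ ∨ (s = τ ∧ P.ord m < P.ord n))),
      delta (I.tx m)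

/-- The balance of node `A` at time `τ⁻`, i.e. accounting for all executions
strictly before time `τ`. -/
noncomputable def QAminus (I : PCInstance N) (P : Policy N) (τ : ℝ) : ℤ :=
  (I.QA0 : ℤ) +
    ∑ m ∈ univ.filter (fun m : Fin N => ∃ s, P.exec? m = some s ∧ s < τ),
      delta (I.tx m)

/-- The balance of node `A` at time `t`, accounting for all executions up to and
including time `t`. -/
noncomputable def QAat (I : PCInstance N) (P : Policy N) (t : ℝ) : ℤ :=
  (I.QA0 : ℤ) +
    ∑ m ∈ univ.filter (fun m : Fin N => ∃ s, P.exec? m = some s ∧ s ≤ t),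
      delta (I.tx m)

/-- Feasibility of executing a transaction of direction `d` and amount `v` when the
balance of node `A` is `qa`: an `A`-to-`B` transaction needs `Q^A ≥ v`, a `B`-to-`A`
transaction needs `Q^B = cap - Q^A ≥ v`. -/
def FeasAt (I : PCInstance N) (d : Bool) (v : ℕ) (qa : ℤ) : Prop :=
  if d then (v : ℤ) ≤ qa else qa ≤ (I.cap : ℤ) - (v : ℤ)

/-- Admissibility of a policy: the tie-breaking order is consistent with execution
times; every transaction is executed within its window `[arr, ddl]` (if at all);
and every execution is feasible given the balance produced by the executions
ordered before it. -/
def Admissible (I : PCInstance N) (P : Policy N) : Prop :=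
  (∀ m n sm sn, P.exec? m = some sm → P.exec? n = some sn → sm < sn → P.ord m < P.ord n) ∧
  (∀ n s, P.exec? n = some s → (I.tx n).arr ≤ s ∧ s ≤ (I.tx n).ddl) ∧
  (∀ n, (P.exec? n).isSome → FeasAt I (I.tx n).dir (I.tx n).amt (QAbefore I P n))

/-- Total blockage `R^π(t)`: the sum of the amounts of the transactions dropped up to
and including time `t` (a transaction not executed is dropped at its deadline). -/
noncomputable def blockage (I : PCInstance N) (P : Policy N) (t : ℝ) : ℕ :=
  ∑ n ∈ univ.filter (fun n : Fin N => P.exec? n = none ∧ (I.tx n).ddl ≤ t), (I.tx n).amt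

/-- Throughput `S^π(t)`: the sum of the amounts of the transactions executed up to and
including time `t`. -/
noncomputable def throughput (I : PCInstance N) (P : Policy N) (t : ℝ) : ℕ :=
  ∑ n ∈ univ.filter (fun n : Fin N => ∃ s, P.exec? n = some s ∧ s ≤ t), (I.tx n).amt

/-- The number of transactions executed up to and including time `t`. -/
noncomputable def numExec (P : Policy N) (t : ℝ) : ℕ :=
  (univ.filter (fun n : Fin N => ∃ s, P.exec? n = some s ∧ s ≤ t)).card

/-- Transaction `m` is pending at time `τ⁻` under policy `P`: it has arrived, its
deadline has not passed, and it has not been executed before `τ`. -/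
def PendingAt (I : PCInstance N) (P : Policy N) (m : Fin N) (τ : ℝ) : Prop :=
  (I.tx m).arr ≤ τ ∧ τ ≤ (I.tx m).ddl ∧ ∀ s, P.exec? m = some s → τ ≤ s

/-- The fixed-amounts assumption: all transaction amounts equal a fixed `v` with
`1 ≤ v ≤ cap`, and initially `Q^A(0) ≥ v` or `Q^B(0) = cap - Q^A(0) ≥ v`. -/
def FixedAmounts (I : PCInstance N) (v : ℕ) : Prop :=
  1 ≤ v ∧ v ≤ I.cap ∧ (∀ n, (I.tx n).amt = v) ∧ (v ≤ I.QA0 ∨ v + I.QA0 ≤ I.cap)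

/-- The PMDE (Process or Match on Deadline Expiration) rule for transaction `n`:
either `n` is executed at its own deadline expiration being feasible when its turn
comes; or `n` is executed at its own deadline expiration immediately after a matching
pending opposite-direction transaction with the earliest deadline (`n` being
infeasible, and the match feasible, beforehand); or `n` is itself executed as the
matched transaction at the deadline expiration of an opposite-direction transaction;
or `n` is dropped at its deadline, being infeasible and with no feasible match
available. -/
def PMDECase (I : PCInstance N) (P : Policy N) (n : Fin N) : Prop :=
  (P.exec? n = some (I.tx n).ddl ∧
     FeasAt I (I.tx n).dir (I.tx n).amt (QAbefore I P n)) ∨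
  (P.exec? n = some (I.tx n).ddl ∧
     ∃ q : Fin N, (I.tx q).dir = !(I.tx n).dir ∧
       P.exec? q = some (I.tx n).ddl ∧ P.ord q < P.ord n ∧
       (∀ m : Fin N, (P.exec? m).isSome → ¬(P.ord q < P.ord m ∧ P.ord m < P.ord n)) ∧
       ¬ FeasAt I (I.tx n).dir (I.tx n).amt (QAbefore I P q) ∧
       FeasAt I (I.tx q).dir (I.tx q).amt (QAbefore I P q) ∧
       (∀ m : Fin N, (I.tx m).dir = (I.tx q).dir → PendingAt I P m (I.tx n).ddl →
          (I.tx q).ddl ≤ (I.tx m).ddl)) ∨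
  (∃ p : Fin N, (I.tx p).dir = !(I.tx n).dir ∧
     P.exec? n = some (I.tx p).ddl ∧ P.exec? p = some (I.tx p).ddl ∧
     P.ord n < P.ord p) ∨
  (P.exec? n = none ∧
     ¬ FeasAt I (I.tx n).dir (I.tx n).amt (QApre I P n (I.tx n).ddl) ∧
     ¬ (FeasAt I (!(I.tx n).dir) (I.tx n).amt (QApre I P n (I.tx n).ddl) ∧
        ∃ q : Fin N, (I.tx q).dir = !(I.tx n).dir ∧ PendingAt I P q (I.tx n).ddl))

/-- The PMDE scheduling policy: an admissible policy that handles every transaction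
according to the PMDE rule. -/
def IsPMDE (I : PCInstance N) (P : Policy N) : Prop :=
  Admissible I P ∧ ∀ n, PMDECase I P n

/-- A DE policy: transactions are executed (or dropped) only at deadline expiration
times.  (In this model dropped transactions are dropped at their own deadline by
definition.) -/
def DEPolicy (I : PCInstance N) (P : Policy N) : Prop :=
  ∀ n s, P.exec? n = some s → ∃ m : Fin N, (I.tx m).ddl = s

/-- The policy `P` acts like PMDE at time `τ`: every transaction whose deadline
expires at `τ`, and every transaction executed at `τ`, is handled according to the
PMDE rule. -/
def PMDEActionAt (I : PCInstance N) (P : Policy N) (τ : ℝ) : Prop :=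
  ∀ n : Fin N, ((I.tx n).ddl = τ ∨ P.exec? n = some τ) → PMDECase I P n

/-- The set of transactions pending just after time `τ` under policy `P`
(together with the channel balance, this constitutes the system state). -/
noncomputable def pendingSet (I : PCInstance N) (P : Policy N) (τ : ℝ) : Finset (Fin N) :=
  univ.filter (fun m : Fin N =>
    (I.tx m).arr ≤ τ ∧ (∀ s, P.exec? m = some s → τ < s) ∧
    (P.exec? m = none → τ < (I.tx m).ddl))

/-- The PFI (Process Feasible Immediately) policy: an admissible policy that executes
every transaction at its arrival time if it is feasible at that instant, and drops it
immediately otherwise. -/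
def IsPFI (I : PCInstance N) (P : Policy N) : Prop :=
  Admissible I P ∧ ∀ n : Fin N,
    (P.exec? n = some (I.tx n).arr ∧
       FeasAt I (I.tx n).dir (I.tx n).amt (QAbefore I P n)) ∨
    (P.exec? n = none ∧
       ¬ FeasAt I (I.tx n).dir (I.tx n).amt (QApre I P n (I.tx n).arr))

/-- A policy that executes each transaction at the earliest instant in
`[arr, ddl]` at which it is feasible: an executed transaction was infeasible at
every earlier instant of its window, and a dropped transaction was infeasible
throughout its window. -/
def GreedyEarliest (I : PCInstance N) (P : Policy N) : Prop :=
  Admissible I P ∧ ∀ n : Fin N,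
    (∀ s, P.exec? n = some s → ∀ s', (I.tx n).arr ≤ s' → s' < s →
        ¬ FeasAt I (I.tx n).dir (I.tx n).amt (QAminus I P s')) ∧
    (P.exec? n = none → ∀ s', (I.tx n).arr ≤ s' → s' ≤ (I.tx n).ddl →
        ¬ FeasAt I (I.tx n).dir (I.tx n).amt (QAminus I P s'))


/-- Witness transactions: A-to-B, amounts 3, 2, 2, zero buffering. -/
def myT0 : Txn := ⟨true, 0, 3, 0, le_refl 0, by norm_num, le_refl 0⟩
def myT1 : Txn := ⟨true, 1, 2, 1, by norm_num, by norm_num, le_refl 1⟩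
def myT2 : Txn := ⟨true, 2, 2, 2, by norm_num, by norm_num, le_refl 2⟩

/-- Witness instance: capacity 4, initial balance `Q^A = 4`. -/
def myI : PCInstance 3 := ⟨4, by norm_num, 4, le_refl 4, ![myT0, myT1, myT2]⟩

/-- A better policy: drop transaction 0, execute transactions 1 and 2. -/
noncomputable def myPi : Policy 3 := ⟨![none, some 1, some 2], Fin.val, Fin.val_injective⟩

/-- A PFI policy: execute transaction 0, drop 1 and 2. -/
noncomputable def myP0 : Policy 3 := ⟨![some 0, none, none], Fin.val, Fin.val_injective⟩

@[simp] lemma myI_tx0 : myI.tx 0 = myT0 := rfl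
@[simp] lemma myI_tx1 : myI.tx 1 = myT1 := rfl
@[simp] lemma myI_tx2 : myI.tx 2 = myT2 := rfl
@[simp] lemma myI_tx_mk0 (h : 0 < 3) : myI.tx ⟨0, h⟩ = myT0 := rfl
@[simp] lemma myI_tx_mk1 (h : 1 < 3) : myI.tx ⟨1, h⟩ = myT1 := rfl
@[simp] lemma myI_tx_mk2 (h : 2 < 3) : myI.tx ⟨2, h⟩ = myT2 := rfl
@[simp] lemma myI_cap : myI.cap = 4 := rfl
@[simp] lemma myI_QA0 : myI.QA0 = 4 := rfl

lemma QAbefore_eval (P : Policy 3) (n : Fin 3) :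
    QAbefore myI P n =
      4 + ((if (P.exec? 0).isSome = true ∧ P.ord 0 < P.ord n then delta (myI.tx 0) else 0)
        + (if (P.exec? 1).isSome = true ∧ P.ord 1 < P.ord n then delta (myI.tx 1) else 0)
        + (if (P.exec? 2).isSome = true ∧ P.ord 2 < P.ord n then delta (myI.tx 2) else 0)) := by
  rw [QAbefore, Finset.sum_filter, Fin.sum_univ_three]
  norm_num

lemma QApre_eval (P : Policy 3) (n : Fin 3) (τ : ℝ) :
    QApre myI P n τ =
      4 + ((if ∃ s, P.exec? 0 = some s ∧ (s < τ ∨ (s = τ ∧ P.ord 0 < P.ord n)) then delta (myI.tx 0) else 0)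
        + (if ∃ s, P.exec? 1 = some s ∧ (s < τ ∨ (s = τ ∧ P.ord 1 < P.ord n)) then delta (myI.tx 1) else 0)
        + (if ∃ s, P.exec? 2 = some s ∧ (s < τ ∨ (s = τ ∧ P.ord 2 < P.ord n)) then delta (myI.tx 2) else 0)) := by
  rw [QApre, Finset.sum_filter, Fin.sum_univ_three]
  norm_num

/-- When transaction amounts are not all equal, the greedy
immediate-processing policy PFI is optimal neither for the success rate nor for the
throughput: there is an instance with zero buffering times and non-identical amounts,
and an admissible policy `π`, such that PFI executes strictly fewer transactions and
achieves strictly smaller final throughput than `π`. -/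
theorem pfi_not_optimal_for_varying_amounts :
    ∃ (N : ℕ) (I : PCInstance N) (π : Policy N),
      (∀ n : Fin N, (I.tx n).ddl = (I.tx n).arr) ∧
      (¬ ∀ m n : Fin N, (I.tx m).amt = (I.tx n).amt) ∧
      Admissible I π ∧
      (∃ P : Policy N, IsPFI I P) ∧
      ∀ P : Policy N, IsPFI I P →
        (univ.filter fun n : Fin N => (P.exec? n).isSome).card
            < (univ.filter fun n : Fin N => (π.exec? n).isSome).card ∧
        (∑ n ∈ univ.filter (fun n : Fin N => (P.exec? n).isSome), (I.tx n).amt)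
            < ∑ n ∈ univ.filter (fun n : Fin N => (π.exec? n).isSome), (I.tx n).amt := by
  refine ⟨3, myI, myPi, ?_, ?_, ?_, ?_, ?_⟩
  · intro n; fin_cases n <;> simp [myT0, myT1, myT2]
  · intro h
    have := h 0 1
    simp [myT0, myT1] at this
  · refine ⟨?_, ?_, ?_⟩
    · intro m n sm sn hm hn hlt
      fin_cases m <;> fin_cases n <;> simp_all [myPi] <;> linarith
    · intro n s hs
      fin_cases n <;> simp_all [myPi, myT0, myT1, myT2]
    · intro n hn
      fin_cases n
      · simp [myPi] at hn
      · rw [QAbefore_eval]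
        rw [if_neg (by simp [myPi]), if_neg (by simp [myPi]), if_neg (by simp [myPi])]
        norm_num [FeasAt, myT1]
      · rw [QAbefore_eval]
        rw [if_neg (by simp [myPi]), if_pos (by simp [myPi]), if_neg (by simp [myPi])]
        norm_num [FeasAt, myT1, myT2, delta]
  · -- existence of a PFI policy
    have hfeas0 : FeasAt myI (myI.tx 0).dir (myI.tx 0).amt (QAbefore myI myP0 0) := by
      rw [QAbefore_eval]
      rw [if_neg (by simp [myP0]), if_neg (by simp [myP0]), if_neg (by simp [myP0])]
      norm_num [FeasAt, myT0]
    refine ⟨myP0, ⟨?_, ?_, ?_⟩, ?_⟩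
    · intro m n sm sn hm hn hlt
      fin_cases m <;> fin_cases n <;> simp_all [myP0] <;> linarith
    · intro n s hs
      fin_cases n <;> simp_all [myP0, myT0, myT1, myT2]
    · intro n hn
      fin_cases n
      · exact hfeas0
      · simp [myP0] at hn
      · simp [myP0] at hn
    · intro n
      fin_cases n
      · exact Or.inl ⟨rfl, hfeas0⟩
      · refine Or.inr ⟨rfl, ?_⟩
        rw [QApre_eval]
        rw [if_pos ⟨0, rfl, Or.inl (by norm_num [myT1])⟩,
            if_neg (by simp [myP0]), if_neg (by simp [myP0])]
        norm_num [FeasAt, myT0, myT1, delta]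
      · refine Or.inr ⟨rfl, ?_⟩
        rw [QApre_eval]
        rw [if_pos ⟨0, rfl, Or.inl (by norm_num [myT2])⟩,
            if_neg (by simp [myP0]), if_neg (by simp [myP0])]
        norm_num [FeasAt, myT0, myT2, delta]
  · -- any PFI policy does strictly worse
    intro P hP
    obtain ⟨⟨hord, hwin, _⟩, hpfi⟩ := hP
    -- executed transactions are executed at their arrival time
    have htime : ∀ n s, P.exec? n = some s → s = (myI.tx n).arr := by
      intro n s hs
      have h1 := (hwin n s hs).1
      have h2 := (hwin n s hs).2
      have hd : (myI.tx n).ddl = (myI.tx n).arr := by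
        fin_cases n <;> simp [myT0, myT1, myT2]
      rw [hd] at h2
      linarith
    -- transaction 0 is executed at time 0
    have he0 : P.exec? 0 = some 0 := by
      rcases hpfi 0 with ⟨h, _⟩ | ⟨hnone, hnf⟩
      · simpa [myT0] using h
      · exfalso
        apply hnf
        have hc : ∀ m : Fin 3, ¬ ∃ s, P.exec? m = some s ∧
            (s < (myI.tx 0).arr ∨ (s = (myI.tx 0).arr ∧ P.ord m < P.ord 0)) := by
          intro m
          rintro ⟨s, hs, hcase⟩
          have hst := htime m s hs
          fin_cases m
          · have h0 : P.exec? 0 = some s := hs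
            rw [hnone] at h0
            cases h0
          · norm_num [myT0, myT1] at hst hcase
            subst hst
            norm_num [myT0] at hcase
          · norm_num [myT0, myT2] at hst hcase
            subst hst
            norm_num [myT0] at hcase
        rw [QApre_eval]
        rw [if_neg (hc 0), if_neg (hc 1), if_neg (hc 2)]
        norm_num [FeasAt, myT0]
    -- transaction 1 is dropped
    have he1 : P.exec? 1 = none := by
      rcases hpfi 1 with ⟨h, hf⟩ | ⟨h, _⟩
      · exfalso
        rw [show (myI.tx 1).arr = (1 : ℝ) from rfl] at h
        have h01 : P.ord 0 < P.ord 1 := hord 0 1 0 1 he0 h (by norm_num)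
        have h21 : ¬((P.exec? 2).isSome = true ∧ P.ord 2 < P.ord 1) := by
          rintro ⟨hsome, hlt⟩
          rw [Option.isSome_iff_exists] at hsome
          obtain ⟨s, hs⟩ := hsome
          have hst := htime 2 s hs
          rw [show (myI.tx 2).arr = (2 : ℝ) from rfl] at hst
          subst hst
          exact absurd (hord 1 2 1 2 h hs (by norm_num)) (not_lt.mpr hlt.le)
        rw [QAbefore_eval] at hf
        rw [if_pos ⟨by simp [he0], h01⟩, if_neg (by simp), if_neg h21] at hf
        norm_num [FeasAt, myT0, myT1, delta] at hf
      · exact h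
    -- transaction 2 is dropped
    have he2 : P.exec? 2 = none := by
      rcases hpfi 2 with ⟨h, hf⟩ | ⟨h, _⟩
      · exfalso
        rw [show (myI.tx 2).arr = (2 : ℝ) from rfl] at h
        have h02 : P.ord 0 < P.ord 2 := hord 0 2 0 2 he0 h (by norm_num)
        rw [QAbefore_eval] at hf
        rw [if_pos ⟨by simp [he0], h02⟩, if_neg (by simp [he1]), if_neg (by simp)] at hf
        norm_num [FeasAt, myT0, myT2, delta] at hf
      · exact h
    have hPset : (univ.filter fun n : Fin 3 => (P.exec? n).isSome) = {0} := by
      ext n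
      fin_cases n <;> simp [he0, he1, he2]
    have hPiset : (univ.filter fun n : Fin 3 => (myPi.exec? n).isSome) = {1, 2} := by
      ext n
      fin_cases n <;> simp only [Finset.mem_filter] <;> simp [myPi]
    rw [hPset, hPiset]
    refine ⟨by simp, ?_⟩
    rw [Finset.sum_singleton, Finset.sum_insert (by simp), Finset.sum_singleton]
    simp [myT0, myT1, myT2]
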